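/- For any nested canalizing function f, as(f) ≤ 5/3 - |f̂(∅)|. -/

import Mathlib

/-!
Peel off the most dominant variable: if `x i = a` forces `f = b` and `g` is the restriction of
`f` to `x i = !a`, averaging over `x i` gives `f̂(∅) = (b + ĝ(∅)) / 2` and
`as(f) = (1 - b ĝ(∅)) / 2 + as(g) / 2`, the first term being the influence of `x i`.
As `|ĝ(∅)| ≤ 1`, this yields `as(f) + |f̂(∅)| = 1 + as(g) / 2` and
`as(f) ≤ (1 + |ĝ(∅)| + as(g)) / 2`, so induction along the nested canalizing structure proves
`as ≤ 4/3` and `as + |f̂(∅)| ≤ 5/3` together.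
-/

open Finset

/-- Sign encoding of a Boolean value: `true ↦ 1`, `false ↦ -1`. -/
def bsign (a : Bool) : ℝ := if a then 1 else -1

/-- The character `χ_U(x) = ∏_{i ∈ U} x_i` (inputs encoded as Booleans). -/
def chi {n : ℕ} (U : Finset (Fin n)) (x : Fin n → Bool) : ℝ :=
  ∏ i ∈ U, bsign (x i)

/-- Fourier coefficient `f̂(U) = 2^{-n} ∑_x f(x) χ_U(x)`. -/
noncomputable def fhat {n : ℕ} (f : (Fin n → Bool) → ℝ) (U : Finset (Fin n)) : ℝ :=
  (∑ x : Fin n → Bool, f x * chi U x) / 2 ^ n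

/-- `f` is a (±1-valued) Boolean function. -/
def IsBoolean {n : ℕ} (f : (Fin n → Bool) → ℝ) : Prop := ∀ x, f x = 1 ∨ f x = -1

/-- Restriction `f^{(i,a)}` of `f` obtained by fixing the `i`-th input to `a`. -/
def restrict {n : ℕ} (f : (Fin n → Bool) → ℝ) (i : Fin n) (a : Bool) :
    (Fin n → Bool) → ℝ :=
  fun x => f (Function.update x i a)

/-- Variable `i` is relevant for `f`. -/
def relevant {n : ℕ} (f : (Fin n → Bool) → ℝ) (i : Fin n) : Prop :=
  ∃ x, f x ≠ f (Function.update x i (!(x i)))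

/-- Number of relevant variables of `f`. -/
noncomputable def numRel {n : ℕ} (f : (Fin n → Bool) → ℝ) : ℕ :=
  Nat.card {i : Fin n // relevant f i}

/-- Influence `I_i(f) = Pr[f(X) ≠ f(X ⊕ e_i)]` for uniform `X`. -/
noncomputable def influence {n : ℕ} (f : (Fin n → Bool) → ℝ) (i : Fin n) : ℝ :=
  (Nat.card {x : Fin n → Bool // f x ≠ f (Function.update x i (!(x i)))} : ℝ) / 2 ^ n

/-- Average sensitivity `as(f) = ∑_i I_i(f)`. -/
noncomputable def avgSens {n : ℕ} (f : (Fin n → Bool) → ℝ) : ℝ :=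
  ∑ i : Fin n, influence f i

/-- `IsNCFwith f L` : `f` is a nested canalizing function with the nested canalizing
structure recorded by the list `L` of triples `(π(j), α_j, β_j)`: fixing variable
`π(j)` to its canalizing value `α_j` forces the output `β_j`, and the restriction to
the non-canalizing value continues with the rest of the list; the base case is a
constant (±1) function. -/
inductive IsNCFwith : {n : ℕ} → ((Fin n → Bool) → ℝ) → List (Fin n × Bool × ℝ) → Prop where
  | const {n : ℕ} (f : (Fin n → Bool) → ℝ) (b : ℝ) (hb : b = 1 ∨ b = -1)
      (h : ∀ x, f x = b) : IsNCFwith f []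
  | step {n : ℕ} (f : (Fin n → Bool) → ℝ) (i : Fin n) (a : Bool) (b : ℝ)
      (hb : b = 1 ∨ b = -1) (L : List (Fin n × Bool × ℝ))
      (hrel : relevant f i)
      (hcan : ∀ x, x i = a → f x = b)
      (hrest : IsNCFwith (restrict f i (!a)) L) :
      IsNCFwith f ((i, a, b) :: L)

/-- `f` is a nested canalizing function. -/
def IsNCF {n : ℕ} (f : (Fin n → Bool) → ℝ) : Prop := ∃ L, IsNCFwith f L

/-- Variable `i` is most dominant: some nested canalizing ordering starts with `i`. -/
def MostDominant {n : ℕ} (f : (Fin n → Bool) → ℝ) (i : Fin n) : Prop :=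
  ∃ a b L, IsNCFwith f ((i, a, b) :: L)

/-- The canalized output values `β_1, β_2, …` recorded in `L` alternate in sign. -/
def AltBetas {n : ℕ} (L : List (Fin n × Bool × ℝ)) : Prop :=
  List.Chain' (fun p q : Fin n × Bool × ℝ => q.2.2 = -p.2.2) L

open scoped BigOperators

section Cube

variable {ι : Type*} [DecidableEq ι]

def flipAt (i : ι) (x : ι → Bool) : ι → Bool := Function.update x i (!(x i))

lemma flipAt_involutive (i : ι) : Function.Involutive (flipAt i) := by
  intro x
  simp [flipAt]

lemma flipAt_update_self (x : ι → Bool) (i : ι) (c : Bool) :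
    flipAt i (Function.update x i c) = Function.update x i (!c) := by
  simp [flipAt]

lemma flipAt_update_of_ne {i j : ι} (hji : j ≠ i) (x : ι → Bool) (c : Bool) :
    flipAt j (Function.update x i c) = Function.update (flipAt j x) i c := by
  simp only [flipAt, Function.update_of_ne hji]
  exact Function.update_comm hji.symm _ _ _

variable [Fintype ι]

lemma expect_eq_expect_update_add_expect_update (h : (ι → Bool) → ℝ) (i : ι) (a : Bool) :
    𝔼 x, h x = (𝔼 x, h (Function.update x i a) + 𝔼 x, h (Function.update x i (!a))) / 2 := by
  have hflip : 𝔼 x, h (flipAt i x) = 𝔼 x, h x :=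
    Fintype.expect_equiv ((flipAt_involutive i).toPerm _) _ _ fun _ => rfl
  have hpair : ∀ x, h x + h (flipAt i x)
      = h (Function.update x i a) + h (Function.update x i (!a)) := by
    intro x
    nth_rewrite 1 [← Function.update_eq_self i x]
    cases hx : x i <;> cases a <;> simp [flipAt, hx, add_comm]
  rw [← Finset.expect_add_distrib, ← Finset.expect_congr rfl fun x _ => hpair x,
    Finset.expect_add_distrib, hflip]
  ring

end Cube

section BooleanFunction

variable {n : ℕ}

lemma fhat_empty_eq_expect (f : (Fin n → Bool) → ℝ) : fhat f ∅ = 𝔼 x, f x := by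
  simp [fhat, chi, Fintype.expect_eq_sum_div_card]

lemma influence_eq_expect (f : (Fin n → Bool) → ℝ) (j : Fin n) :
    influence f j = 𝔼 x, if f x ≠ f (flipAt j x) then (1 : ℝ) else 0 := by
  rw [Fintype.expect_eq_sum_div_card, Finset.sum_boole, influence, Nat.card_eq_fintype_card,
    Fintype.card_subtype]
  simp only [Fintype.card_pi, Fintype.card_bool, prod_const, card_univ, Fintype.card_fin,
    Nat.cast_pow, Nat.cast_ofNat]
  congr!

lemma IsBoolean.abs_expect_le_one {f : (Fin n → Bool) → ℝ} (hf : IsBoolean f) :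
    |𝔼 x, f x| ≤ 1 :=
  (Finset.abs_expect_le _ _).trans <| Finset.expect_le Finset.univ_nonempty fun x _ => by
    rcases hf x with h | h <;> simp [h]

lemma avgSens_of_forall_eq {f : (Fin n → Bool) → ℝ} {b : ℝ} (hf : ∀ x, f x = b) :
    avgSens f = 0 :=
  Finset.sum_eq_zero fun j _ => by simp [influence_eq_expect, hf]

lemma restrict_update (f : (Fin n → Bool) → ℝ) (i : Fin n) (a c : Bool) (x : Fin n → Bool) :
    _root_.restrict f i a (Function.update x i c) = _root_.restrict f i a x := by
  simp [_root_.restrict]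

lemma influence_restrict_self (f : (Fin n → Bool) → ℝ) (i : Fin n) (a : Bool) :
    influence (_root_.restrict f i a) i = 0 := by
  simp [influence_eq_expect, flipAt, restrict_update]

end BooleanFunction

section Canalizing

variable {n : ℕ} {f : (Fin n → Bool) → ℝ} {i : Fin n} {a : Bool} {b : ℝ}

lemma expect_eq_of_canalizing (hcan : ∀ x, x i = a → f x = b) :
    𝔼 x, f x = (b + 𝔼 x, _root_.restrict f i (!a) x) / 2 := by
  rw [expect_eq_expect_update_add_expect_update f i a,
    Finset.expect_congr rfl fun x _ => hcan _ (Function.update_self i a x), Fintype.expect_const]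
  rfl

lemma influence_eq_of_canalizing_self (hb : b = 1 ∨ b = -1)
    (hcan : ∀ x, x i = a → f x = b) (hg : IsBoolean (_root_.restrict f i (!a))) :
    influence f i = (1 - b * 𝔼 x, _root_.restrict f i (!a) x) / 2 := by
  set g := _root_.restrict f i (!a)
  have hcan' : ∀ x, f (Function.update x i a) = b := fun x => hcan _ (Function.update_self i a x)
  have hg_def : ∀ x, f (Function.update x i (!a)) = g x := fun _ => rfl
  have hsens : ∀ x, (if b ≠ g x then (1 : ℝ) else 0) = (1 - b * g x) / 2 := by
    intro x
    rcases hg x with h | h <;> rcases hb with rfl | rfl <;> norm_num [h]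
  rw [influence_eq_expect, expect_eq_expect_update_add_expect_update _ i a]
  -- flipping `x i` swaps the canalizing and the restricted branch
  simp only [flipAt_update_self, Bool.not_not, hcan', hg_def, ne_comm (a := g _), add_self_div_two]
  rw [Finset.expect_congr rfl fun x _ => hsens x, ← Finset.expect_div, Finset.expect_sub_distrib,
    Fintype.expect_const, ← Finset.mul_expect]

lemma influence_eq_of_canalizing_of_ne (hcan : ∀ x, x i = a → f x = b) {j : Fin n}
    (hji : j ≠ i) :
    influence f j = influence (_root_.restrict f i (!a)) j / 2 := by
  have hcan' : ∀ x, f (Function.update x i a) = b := fun x => hcan _ (Function.update_self i a x)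
  rw [influence_eq_expect, influence_eq_expect,
    expect_eq_expect_update_add_expect_update _ i a]
  simp only [flipAt_update_of_ne hji, hcan', ne_eq, not_true_eq_false, if_false,
    Fintype.expect_const, zero_add]
  rfl

lemma avgSens_eq_of_canalizing (hb : b = 1 ∨ b = -1)
    (hcan : ∀ x, x i = a → f x = b) (hg : IsBoolean (_root_.restrict f i (!a))) :
    avgSens f = (1 - b * 𝔼 x, _root_.restrict f i (!a) x) / 2
      + avgSens (_root_.restrict f i (!a)) / 2 := by
  rw [avgSens, avgSens, ← Finset.add_sum_erase _ _ (Finset.mem_univ i),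
    ← Finset.add_sum_erase _ _ (Finset.mem_univ i), influence_restrict_self, zero_add,
    influence_eq_of_canalizing_self hb hcan hg, Finset.sum_div,
    Finset.sum_congr rfl fun j hj =>
      influence_eq_of_canalizing_of_ne hcan (Finset.ne_of_mem_erase hj)]

end Canalizing

namespace IsNCFwith

variable {n : ℕ} {f : (Fin n → Bool) → ℝ} {L : List (Fin n × Bool × ℝ)}

lemma isBoolean (h : IsNCFwith f L) : IsBoolean f := by
  induction h with
  | const f b hb hconst => exact fun x => hconst x ▸ hb
  | step f i a b hb L _ hcan _ ih =>
    intro x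
    by_cases hx : x i = a
    · exact hcan x hx ▸ hb
    · simpa [_root_.restrict, ← Bool.eq_not.mpr hx] using ih x

lemma avgSens_le_and_add_abs_expect_le (h : IsNCFwith f L) :
    avgSens f ≤ 4 / 3 ∧ avgSens f + |𝔼 x, f x| ≤ 5 / 3 := by
  induction h with
  | const f b hb hconst =>
    rw [avgSens_of_forall_eq hconst, Finset.expect_congr rfl fun x _ => hconst x,
      Fintype.expect_const]
    rcases hb with rfl | rfl <;> norm_num
  | step f i a b hb L _ hcan hrest ih =>
    set c := 𝔼 x, _root_.restrict f i (!a) x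
    have hc : |c| ≤ 1 := hrest.isBoolean.abs_expect_le_one
    have hbc : |b * c| = |c| := by rcases hb with rfl | rfl <;> simp
    have hcollapse : 1 - b * c + |b + c| = 2 := by
      rcases abs_le.mp hc with ⟨hc₁, hc₂⟩
      rcases hb with rfl | rfl
      · rw [abs_of_nonneg (by linarith)]; ring
      · rw [abs_of_nonpos (by linarith)]; ring
    rw [avgSens_eq_of_canalizing hb hcan hrest.isBoolean, expect_eq_of_canalizing hcan, abs_div,
      abs_two]
    constructor
    · linarith [ih.2, neg_abs_le (b * c)]
    · linarith [ih.1]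

end IsNCFwith

/-- For any NCF `f`, `as(f) ≤ 5/3 - |f̂(∅)|`. -/
theorem avgSens_ncf_le {n : ℕ} (f : (Fin n → Bool) → ℝ) (hf : IsNCF f) :
    avgSens f ≤ 5 / 3 - |fhat f ∅| := by
  obtain ⟨L, hL⟩ := hf
  rw [fhat_empty_eq_expect]
  linarith [hL.avgSens_le_and_add_abs_expect_le.2]
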